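/- arXiv:math-ph/0302020 — 2 statements merged into one kernel-verified Lean document; each statement's English description precedes it below -/
import Mathlib

section
/- Let ε = Σ_{β ∈ Ψ⁺} β be the sum of all positive roots of Φ lying in the linear span of {α_j : j ∈ S}, and set p_i := −2⟨ε, α_i⟩/⟨α_i, α_i⟩ for i ∉ S. Suppose k ∈ span Φ satisfies ⟨λ_i, k⟩ ≥ 0 for all i = 1, …, r and ⟨α_j, k⟩ ≤ 0 for all j ∈ S. Then 0 ≤ 2 Σ_{j ∈ S} ⟨λ_j, k⟩ ≤ Σ_{i ∉ S} p_i ⟨λ_i, k⟩. -/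
open RealInnerProductSpace
open scoped Classical

/-- The reflection in the hyperplane orthogonal to `a`:
`σ_a(v) = v − (2⟨v,a⟩/⟨a,a⟩) a`. -/
noncomputable def reflect {V : Type*} [NormedAddCommGroup V] [InnerProductSpace ℝ V]
    (a v : V) : V :=
  v - (2 * ⟪v, a⟫ / ⟪a, a⟫) • a

/-- `Φ` is a reduced crystallographic root system with simple roots `α 0, …, α (r-1)`. -/
structure RootSystemData (V : Type*) [NormedAddCommGroup V] [InnerProductSpace ℝ V]
    {r : ℕ} (Φ : Finset V) (α : Fin r → V) : Prop where
  nonzero : ∀ β ∈ Φ, β ≠ 0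
  simple_mem : ∀ i, α i ∈ Φ
  indep : LinearIndependent ℝ α
  int_comb : ∀ β ∈ Φ, ∃ c : Fin r → ℤ,
      β = ∑ i, (c i : ℝ) • α i ∧ ((∀ i, 0 ≤ c i) ∨ (∀ i, c i ≤ 0))
  reflect_mem : ∀ β ∈ Φ, ∀ γ ∈ Φ, reflect β γ ∈ Φ
  cartan_int : ∀ β ∈ Φ, ∀ γ ∈ Φ, ∃ n : ℤ, 2 * ⟪γ, β⟫ / ⟪β, β⟫ = (n : ℝ)

/-- `β` is a positive root: a nonnegative integer combination of the simple roots. -/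
def IsPosRoot {V : Type*} [NormedAddCommGroup V] [InnerProductSpace ℝ V]
    {r : ℕ} (α : Fin r → V) (β : V) : Prop :=
  ∃ c : Fin r → ℤ, β = ∑ i, (c i : ℝ) • α i ∧ ∀ i, 0 ≤ c i

/-- The result of applying the word of reflections `σ_{α i}`, `i ∈ l`, to `k`. -/
noncomputable def wordApply {V : Type*} [NormedAddCommGroup V] [InnerProductSpace ℝ V]
    {r : ℕ} (α : Fin r → V) (l : List (Fin r)) (k : V) : V :=
  l.foldr (fun i w => reflect (α i) w) k

/-!
Expanding `k` in the simple roots, whose coefficients are read off by the weights, gives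
`⟪ε, k⟫ = Σ_i (2⟪ε, α i⟫ / ⟪α i, α i⟫) ⟪λ i, k⟫`, and `⟪ε, k⟫ ≤ 0` because `ε` is a nonnegative
combination of the `α j`, `j ∈ S`. For `j ∈ S`, `σ_j` permutes the roots of `Ψ⁺` that are not
multiples of `α j`, so they contribute nothing to `⟪ε, α j⟫`, whence `⟪ε, α j⟫ ≥ ⟪α j, α j⟫`: the
coefficients at `j ∈ S` are at least `2`, and the rest of the sum gives the bound.
-/

section Reflection

variable {V : Type*} [NormedAddCommGroup V] [InnerProductSpace ℝ V]

lemma inner_reflect_self {a : V} (ha : a ≠ 0) (v : V) : ⟪reflect a v, a⟫ = -⟪v, a⟫ := by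
  have : ⟪a, a⟫ ≠ 0 := inner_self_ne_zero.mpr ha
  simp only [reflect, inner_sub_left, real_inner_smul_left]
  field_simp
  ring

lemma reflect_reflect {a : V} (ha : a ≠ 0) (v : V) : reflect a (reflect a v) = v := by
  have : ⟪a, a⟫ ≠ 0 := inner_self_ne_zero.mpr ha
  simp only [reflect, inner_sub_left, real_inner_smul_left]
  field_simp
  module

lemma reflect_mem_span {s : Set V} {a v : V} (ha : a ∈ Submodule.span ℝ s)
    (hv : v ∈ Submodule.span ℝ s) : reflect a v ∈ Submodule.span ℝ s :=
  Submodule.sub_mem _ hv (Submodule.smul_mem _ _ ha)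

/-- `σ_a` negates `⟪·, a⟫`, so the sum over a `σ_a`-stable set is its own negative. -/
lemma sum_inner_eq_zero_of_reflect_mem {a : V} (ha : a ≠ 0) {T : Finset V}
    (hT : ∀ β ∈ T, reflect a β ∈ T) : ∑ β ∈ T, ⟪β, a⟫ = 0 := by
  have hperm : ∑ β ∈ T, ⟪reflect a β, a⟫ = ∑ β ∈ T, ⟪β, a⟫ :=
    Finset.sum_nbij' (reflect a) (reflect a) hT hT
      (fun β _ => reflect_reflect ha β) (fun β _ => reflect_reflect ha β) (fun _ _ => rfl)
  simp only [inner_reflect_self ha, Finset.sum_neg_distrib] at hperm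
  linarith

end Reflection

section FundamentalWeights

variable {V : Type*} [NormedAddCommGroup V] [InnerProductSpace ℝ V] {r : ℕ}

def IsFundamentalWeights (α lam : Fin r → V) : Prop :=
  ∀ i j, 2 * ⟪α i, lam j⟫ / ⟪α i, α i⟫ = if i = j then 1 else 0

namespace IsFundamentalWeights

variable {α lam : Fin r → V}

lemma simple_ne_zero (hlam : IsFundamentalWeights α lam) (i : Fin r) : α i ≠ 0 := by
  intro h
  simpa [h] using hlam i i

lemma inner_simple_self_pos (hlam : IsFundamentalWeights α lam) (i : Fin r) :
    0 < ⟪α i, α i⟫ :=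
  real_inner_self_pos.mpr (hlam.simple_ne_zero i)

lemma inner_simple (hlam : IsFundamentalWeights α lam) (j i : Fin r) :
    ⟪lam j, α i⟫ = if i = j then ⟪α i, α i⟫ / 2 else 0 := by
  have h := hlam i j
  have := (hlam.inner_simple_self_pos i).ne'
  rw [real_inner_comm]
  split_ifs at h ⊢ <;> field_simp at h <;> linarith

lemma inner_sum_smul (hlam : IsFundamentalWeights α lam) (c : Fin r → ℝ) (j : Fin r) :
    ⟪lam j, ∑ i, c i • α i⟫ = c j * (⟪α j, α j⟫ / 2) := by
  simp [inner_sum, real_inner_smul_right, hlam.inner_simple]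

lemma inner_smul_simple_of_ne (hlam : IsFundamentalWeights α lam) {i j : Fin r} (hij : i ≠ j)
    (m : ℝ) : ⟪lam i, m • α j⟫ = 0 := by
  simp [real_inner_smul_right, hlam.inner_simple, Ne.symm hij]

lemma eq_sum_smul_of_mem_span (hlam : IsFundamentalWeights α lam) {v : V}
    (hv : v ∈ Submodule.span ℝ (Set.range α)) :
    v = ∑ i, (2 * ⟪lam i, v⟫ / ⟪α i, α i⟫) • α i := by
  obtain ⟨c, rfl⟩ := (Submodule.mem_span_range_iff_exists_fun ℝ).mp hv
  refine Finset.sum_congr rfl fun i _ => ?_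
  have := (hlam.inner_simple_self_pos i).ne'
  rw [hlam.inner_sum_smul]
  field_simp

lemma inner_eq_sum_mul_inner (hlam : IsFundamentalWeights α lam) (u : V) {v : V}
    (hv : v ∈ Submodule.span ℝ (Set.range α)) :
    ⟪u, v⟫ = ∑ i, 2 * ⟪u, α i⟫ / ⟪α i, α i⟫ * ⟪lam i, v⟫ := by
  conv_lhs => rw [hlam.eq_sum_smul_of_mem_span hv]
  simp only [inner_sum, real_inner_smul_right]
  exact Finset.sum_congr rfl fun i _ => by ring

lemma inner_eq_zero_of_mem_span_image (hlam : IsFundamentalWeights α lam) {S : Set (Fin r)}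
    {i : Fin r} (hi : i ∉ S) {v : V} (hv : v ∈ Submodule.span ℝ (α '' S)) :
    ⟪lam i, v⟫ = 0 := by
  have hle : Submodule.span ℝ (α '' S) ≤ LinearMap.ker (innerₛₗ ℝ (lam i)) := by
    rw [Submodule.span_le]
    rintro _ ⟨j, hj, rfl⟩
    simp [hlam.inner_simple, show j ≠ i from fun h => hi (h ▸ hj)]
  simpa using hle hv

lemma mem_span_singleton_of_inner_eq_zero (hlam : IsFundamentalWeights α lam) {j : Fin r}
    {v : V} (hv : v ∈ Submodule.span ℝ (Set.range α)) (h : ∀ i ≠ j, ⟪lam i, v⟫ = 0) :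
    v ∈ ℝ ∙ α j := by
  rw [hlam.eq_sum_smul_of_mem_span hv, Finset.sum_eq_single j (fun i _ hi => by simp [h i hi])
    (by simp)]
  exact Submodule.smul_mem _ _ (Submodule.mem_span_singleton_self _)

lemma inner_nonneg_of_isPosRoot (hlam : IsFundamentalWeights α lam) {β : V}
    (hβ : IsPosRoot α β) (i : Fin r) : 0 ≤ ⟪lam i, β⟫ := by
  obtain ⟨c, rfl, hc⟩ := hβ
  rw [hlam.inner_sum_smul]
  have := hlam.inner_simple_self_pos i
  have : (0 : ℝ) ≤ c i := by exact_mod_cast hc i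
  positivity

lemma inner_reflect_simple_of_ne (hlam : IsFundamentalWeights α lam) {i j : Fin r}
    (hij : i ≠ j) (v : V) : ⟪lam i, reflect (α j) v⟫ = ⟪lam i, v⟫ := by
  rw [reflect, inner_sub_right, hlam.inner_smul_simple_of_ne hij, sub_zero]

end IsFundamentalWeights

end FundamentalWeights

section PositiveRoots

variable {V : Type*} [NormedAddCommGroup V] [InnerProductSpace ℝ V] {r : ℕ}
  {Φ : Finset V} {α lam : Fin r → V}

lemma IsPosRoot.mem_span {β : V} (hβ : IsPosRoot α β) : β ∈ Submodule.span ℝ (Set.range α) := by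
  obtain ⟨c, rfl, -⟩ := hβ
  exact (Submodule.mem_span_range_iff_exists_fun ℝ).mpr ⟨_, rfl⟩

lemma RootSystemData.subset_span (hΦ : RootSystemData V Φ α) :
    (Φ : Set V) ⊆ Submodule.span ℝ (Set.range α) := by
  intro β hβ
  obtain ⟨c, rfl, -⟩ := hΦ.int_comb β hβ
  exact (Submodule.mem_span_range_iff_exists_fun ℝ).mpr ⟨_, rfl⟩

/-- Roots are sign-coherent, so one positive coordinate suffices. -/
lemma RootSystemData.isPosRoot_of_inner_pos (hΦ : RootSystemData V Φ α)
    (hlam : IsFundamentalWeights α lam) {β : V} (hβ : β ∈ Φ) {i : Fin r}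
    (hi : 0 < ⟪lam i, β⟫) : IsPosRoot α β := by
  obtain ⟨c, rfl, hc | hc⟩ := hΦ.int_comb β hβ
  · exact ⟨c, rfl, hc⟩
  · rw [hlam.inner_sum_smul] at hi
    have := hlam.inner_simple_self_pos i
    have : (c i : ℝ) ≤ 0 := by exact_mod_cast hc i
    nlinarith

/-- `Ψ⁺` -/
noncomputable def posRootsIn (Φ : Finset V) (α : Fin r → V) (S : Finset (Fin r)) : Finset V :=
  Φ.filter fun β => IsPosRoot α β ∧ β ∈ Submodule.span ℝ (α '' (S : Set (Fin r)))

variable {S : Finset (Fin r)} {β : V}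

lemma mem_posRootsIn : β ∈ posRootsIn Φ α S ↔
    β ∈ Φ ∧ IsPosRoot α β ∧ β ∈ Submodule.span ℝ (α '' (S : Set (Fin r))) := by
  simp [posRootsIn]

/-- A root of `Ψ⁺` that is not a multiple of `α j` has a positive coordinate at some `i ≠ j`,
which `σ_j` does not change. -/
lemma RootSystemData.reflect_mem_posRootsIn (hΦ : RootSystemData V Φ α)
    (hlam : IsFundamentalWeights α lam) {j : Fin r} (hj : j ∈ S)
    (hβ : β ∈ posRootsIn Φ α S) (hβj : β ∉ ℝ ∙ α j) :
    reflect (α j) β ∈ posRootsIn Φ α S ∧ reflect (α j) β ∉ ℝ ∙ α j := by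
  obtain ⟨hβΦ, hβpos, hβS⟩ := mem_posRootsIn.mp hβ
  obtain ⟨i, hij, hi⟩ : ∃ i ≠ j, ⟪lam i, β⟫ ≠ 0 := by
    by_contra! h
    exact hβj (hlam.mem_span_singleton_of_inner_eq_zero hβpos.mem_span h)
  have hi_pos : 0 < ⟪lam i, reflect (α j) β⟫ := by
    rw [hlam.inner_reflect_simple_of_ne hij]
    exact (hlam.inner_nonneg_of_isPosRoot hβpos i).lt_of_ne' hi
  have hσΦ := hΦ.reflect_mem _ (hΦ.simple_mem j) β hβΦ
  refine ⟨mem_posRootsIn.mpr ⟨hσΦ, hΦ.isPosRoot_of_inner_pos hlam hσΦ hi_pos,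
    reflect_mem_span (Submodule.subset_span ⟨j, hj, rfl⟩) hβS⟩, fun hσ => hi_pos.ne' ?_⟩
  obtain ⟨m, hm⟩ := Submodule.mem_span_singleton.mp hσ
  rw [← hm, hlam.inner_smul_simple_of_ne hij]

lemma RootSystemData.inner_simple_self_le_inner_sum_posRootsIn (hΦ : RootSystemData V Φ α)
    (hlam : IsFundamentalWeights α lam) {j : Fin r} (hj : j ∈ S) :
    ⟪α j, α j⟫ ≤ ⟪∑ β ∈ posRootsIn Φ α S, β, α j⟫ := by
  have hαj : α j ∈ posRootsIn Φ α S := mem_posRootsIn.mpr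
    ⟨hΦ.simple_mem j, hΦ.isPosRoot_of_inner_pos hlam (hΦ.simple_mem j) (i := j)
      (by simpa [hlam.inner_simple] using hlam.inner_simple_self_pos j),
      Submodule.subset_span ⟨j, hj, rfl⟩⟩
  have hmult : ∀ β ∈ (posRootsIn Φ α S).filter (· ∈ ℝ ∙ α j), 0 ≤ ⟪β, α j⟫ := by
    intro β hβ
    obtain ⟨hβ, hβj⟩ := Finset.mem_filter.mp hβ
    obtain ⟨m, rfl⟩ := Submodule.mem_span_singleton.mp hβj
    have hm := hlam.inner_nonneg_of_isPosRoot (mem_posRootsIn.mp hβ).2.1 j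
    simp only [real_inner_smul_right, real_inner_smul_left, hlam.inner_simple, if_pos] at hm ⊢
    nlinarith [hlam.inner_simple_self_pos j]
  have hrest : ∑ β ∈ (posRootsIn Φ α S).filter (· ∉ ℝ ∙ α j), ⟪β, α j⟫ = 0 := by
    refine sum_inner_eq_zero_of_reflect_mem (hlam.simple_ne_zero j) fun β hβ => ?_
    obtain ⟨hβ, hβj⟩ := Finset.mem_filter.mp hβ
    exact Finset.mem_filter.mpr (hΦ.reflect_mem_posRootsIn hlam hj hβ hβj)
  rw [sum_inner, ← Finset.sum_filter_add_sum_filter_not _ (· ∈ ℝ ∙ α j), hrest, add_zero]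
  exact Finset.single_le_sum hmult (Finset.mem_filter.mpr ⟨hαj, Submodule.mem_span_singleton_self _⟩)

lemma IsFundamentalWeights.inner_sum_posRootsIn_nonpos (hlam : IsFundamentalWeights α lam)
    {k : V} (hk : ∀ j ∈ S, ⟪α j, k⟫ ≤ 0) : ⟪∑ β ∈ posRootsIn Φ α S, β, k⟫ ≤ 0 := by
  rw [sum_inner]
  refine Finset.sum_nonpos fun β hβ => ?_
  obtain ⟨-, hβpos, hβS⟩ := mem_posRootsIn.mp hβ
  rw [hlam.eq_sum_smul_of_mem_span hβpos.mem_span, sum_inner]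
  refine Finset.sum_nonpos fun i _ => ?_
  rw [real_inner_smul_left]
  by_cases hi : i ∈ S
  · have := hlam.inner_nonneg_of_isPosRoot hβpos i
    have := hlam.inner_simple_self_pos i
    exact mul_nonpos_of_nonneg_of_nonpos (by positivity) (hk i hi)
  · simp [hlam.inner_eq_zero_of_mem_span_image (S := (S : Set (Fin r))) hi hβS]

end PositiveRoots

theorem holomorphic_charge_bound_general
    {V : Type*} [NormedAddCommGroup V] [InnerProductSpace ℝ V]
    {r : ℕ} (Φ : Finset V) (α : Fin r → V) (hΦ : RootSystemData V Φ α)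
    (lam : Fin r → V)
    (hlam : ∀ i j, 2 * ⟪α i, lam j⟫ / ⟪α i, α i⟫ = if i = j then 1 else 0)
    (S : Finset (Fin r))
    (Ψplus : Finset V)
    (hΨ : Ψplus = Φ.filter (fun β => IsPosRoot α β ∧
      β ∈ Submodule.span ℝ (α '' (S : Set (Fin r)))))
    (ε : V) (hε : ε = ∑ β ∈ Ψplus, β)
    (p : Fin r → ℝ) (hp : ∀ i, p i = -(2 * ⟪ε, α i⟫ / ⟪α i, α i⟫))
    (k : V) (hk : k ∈ Submodule.span ℝ (Φ : Set V))
    (hpos : ∀ i, 0 ≤ ⟪lam i, k⟫)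
    (hneg : ∀ j ∈ S, ⟪α j, k⟫ ≤ 0) :
    0 ≤ 2 * ∑ j ∈ S, ⟪lam j, k⟫ ∧
    2 * ∑ j ∈ S, ⟪lam j, k⟫ ≤ ∑ i ∈ Sᶜ, p i * ⟪lam i, k⟫ := by
  have hlam : IsFundamentalWeights α lam := hlam
  have hε : ε = ∑ β ∈ posRootsIn Φ α S, β := by rw [hε, hΨ]; rfl
  have hk : k ∈ Submodule.span ℝ (Set.range α) := Submodule.span_le.mpr hΦ.subset_span hk
  have hεk : ∑ i, 2 * ⟪ε, α i⟫ / ⟪α i, α i⟫ * ⟪lam i, k⟫ ≤ 0 := by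
    rw [← hlam.inner_eq_sum_mul_inner ε hk, hε]
    exact hlam.inner_sum_posRootsIn_nonpos hneg
  have hεS : ∑ j ∈ S, 2 * ⟪lam j, k⟫ ≤ ∑ j ∈ S, 2 * ⟪ε, α j⟫ / ⟪α j, α j⟫ * ⟪lam j, k⟫ := by
    refine Finset.sum_le_sum fun j hj => mul_le_mul_of_nonneg_right ?_ (hpos j)
    rw [le_div_iff₀ (hlam.inner_simple_self_pos j), hε]
    linarith [hΦ.inner_simple_self_le_inner_sum_posRootsIn hlam hj]
  rw [← Finset.sum_add_sum_compl S] at hεk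
  simp only [hp, neg_mul, Finset.sum_neg_distrib, Finset.mul_sum]
  exact ⟨Finset.sum_nonneg fun j _ => by linarith [hpos j], by linarith⟩

/-- With `ε` the sum of the positive roots lying in the span of
`{α j : j ∈ S}` and `p i := −2⟨ε, α i⟩/⟨α i, α i⟩` for `i ∉ S`: if `k ∈ span Φ`
satisfies `⟨λ i, k⟩ ≥ 0` for all `i` and `⟨α j, k⟩ ≤ 0` for all `j ∈ S`, then
`0 ≤ 2 Σ_{j ∈ S} ⟨λ j, k⟩ ≤ Σ_{i ∉ S} p i ⟨λ i, k⟩`. -/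
theorem holomorphic_charge_bound
    {V : Type*} [NormedAddCommGroup V] [InnerProductSpace ℝ V] [FiniteDimensional ℝ V]
    {r : ℕ} (Φ : Finset V) (α : Fin r → V) (hΦ : RootSystemData V Φ α)
    (lam : Fin r → V)
    (hlam_mem : ∀ j, lam j ∈ Submodule.span ℝ (Φ : Set V))
    (hlam : ∀ i j, 2 * ⟪α i, lam j⟫ / ⟪α i, α i⟫ = if i = j then 1 else 0)
    (S : Finset (Fin r))
    (Ψplus : Finset V)
    (hΨ : Ψplus = Φ.filter (fun β => IsPosRoot α β ∧
      β ∈ Submodule.span ℝ (α '' (S : Set (Fin r)))))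
    (ε : V) (hε : ε = ∑ β ∈ Ψplus, β)
    (p : Fin r → ℝ) (hp : ∀ i, p i = -(2 * ⟪ε, α i⟫ / ⟪α i, α i⟫))
    (k : V) (hk : k ∈ Submodule.span ℝ (Φ : Set V))
    (hpos : ∀ i, 0 ≤ ⟪lam i, k⟫)
    (hneg : ∀ j ∈ S, ⟪α j, k⟫ ≤ 0) :
    0 ≤ 2 * ∑ j ∈ S, ⟪lam j, k⟫ ∧
    2 * ∑ j ∈ S, ⟪lam j, k⟫ ≤ ∑ i ∈ Sᶜ, p i * ⟪lam i, k⟫ :=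
  holomorphic_charge_bound_general Φ α hΦ lam hlam S Ψplus hΨ ε hε p hp k hk hpos hneg
end

section
/- Fix nonnegative real numbers m_i for each i ∉ S. Then the set of tuples (h_j)_{j ∈ S} of nonnegative integers for which there exists k ∈ span Φ with ⟨α_j, k⟩ ≤ 0 for all j ∈ S, ⟨λ_i, k⟩ = m_i for all i ∉ S, and ⟨λ_j, k⟩ = h_j for all j ∈ S, is finite. -/
open RealInnerProductSpace
open scoped Classical

/-- Fix nonnegative reals `m i` for `i ∉ S`. The set of tuples
`(h j)_{j ∈ S}` of nonnegative integers for which there is `k ∈ span Φ` with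
`⟨α j, k⟩ ≤ 0` for all `j ∈ S`, `⟨λ i, k⟩ = m i` for all `i ∉ S`, and `⟨λ j, k⟩ = h j`
for all `j ∈ S`, is finite. -/
theorem finitely_many_holomorphic_charges
    {V : Type*} [NormedAddCommGroup V] [InnerProductSpace ℝ V] [FiniteDimensional ℝ V]
    {r : ℕ} (Φ : Finset V) (α : Fin r → V) (hΦ : RootSystemData V Φ α)
    (lam : Fin r → V)
    (hlam_mem : ∀ j, lam j ∈ Submodule.span ℝ (Φ : Set V))
    (hlam : ∀ i j, 2 * ⟪α i, lam j⟫ / ⟪α i, α i⟫ = if i = j then 1 else 0)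
    (S : Finset (Fin r))
    (m : Fin r → ℝ) (hm : ∀ i ∉ S, 0 ≤ m i) :
    {h : {j // j ∈ S} → ℕ |
      ∃ k ∈ Submodule.span ℝ (Φ : Set V),
        (∀ j ∈ S, ⟪α j, k⟫ ≤ 0) ∧
        (∀ i ∉ S, ⟪lam i, k⟫ = m i) ∧
        (∀ j : {j // j ∈ S}, ⟪lam j.1, k⟫ = (h j : ℝ))}.Finite := by
  classical
  -- constant bound
  set C : ℝ := ∑ i ∈ Sᶜ, (2 * m i / ⟪α i, α i⟫) * ‖α i‖ with hC
  have hαne : ∀ i, ⟪α i, α i⟫ ≠ 0 := fun i =>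
    inner_self_ne_zero.mpr (hΦ.nonzero _ (hΦ.simple_mem i))
  have hαpos : ∀ i, 0 < ⟪α i, α i⟫ := fun i =>
    lt_of_le_of_ne real_inner_self_nonneg (Ne.symm (hαne i))
  have hCnn : 0 ≤ C := by
    apply Finset.sum_nonneg
    intro i hi
    have hiS : i ∉ S := by simpa using hi
    have h1 := hm i hiS
    have h2 := hαpos i
    positivity
  apply Set.Finite.subset
    (Set.Finite.pi (fun j : {j // j ∈ S} => Set.finite_Iic ⌈‖lam j.1‖ * C⌉₊))
  intro h hh
  obtain ⟨k, hk_span, hneg, hmval, hhval⟩ := hh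
  -- k lies in the span of the simple roots
  have hspan : Submodule.span ℝ (Φ : Set V) ≤ Submodule.span ℝ (Set.range α) := by
    rw [Submodule.span_le]
    intro β hβ
    obtain ⟨c, hc, -⟩ := hΦ.int_comb β hβ
    rw [hc]
    exact Submodule.sum_mem _ fun i _ =>
      Submodule.smul_mem _ _ (Submodule.subset_span ⟨i, rfl⟩)
  obtain ⟨t, ht⟩ := (Finsupp.mem_span_range_iff_exists_finsupp).mp (hspan hk_span)
  rw [Finsupp.sum_fintype _ _ (fun i => zero_smul ℝ (α i))] at ht
  -- pairing with lam j
  have hinner : ∀ i j, ⟪lam j, α i⟫ = if i = j then ⟪α i, α i⟫ / 2 else 0 := by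
    intro i j
    have := hlam i j
    rw [div_eq_iff (hαne i)] at this
    rw [real_inner_comm]
    split_ifs with hij <;> simp [hij] at this ⊢ <;> linarith
  have key : ∀ j, ⟪lam j, k⟫ = t j * (⟪α j, α j⟫ / 2) := by
    intro j
    rw [← ht, inner_sum]
    rw [Finset.sum_eq_single j]
    · rw [real_inner_smul_right, hinner]; simp
    · intro i _ hij
      rw [real_inner_smul_right, hinner, if_neg hij, mul_zero]
    · simp
  -- t j ≥ 0 on S
  have htS : ∀ j (hj : j ∈ S), 0 ≤ t j := by
    intro j hj
    have h1 := key j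
    rw [hhval ⟨j, hj⟩] at h1
    have h2 : 0 < ⟪α j, α j⟫ / 2 := by linarith [hαpos j]
    nlinarith [Nat.cast_nonneg (h ⟨j, hj⟩) (α := ℝ)]
  -- t i determined off S
  have htm : ∀ i, i ∉ S → t i = 2 * m i / ⟪α i, α i⟫ := by
    intro i hi
    have h1 := key i
    rw [hmval i hi] at h1
    rw [eq_div_iff (hαne i)]
    linarith
  -- norm bound
  have hkk : ‖k‖ ^ 2 = ∑ i, t i * ⟪α i, k⟫ := by
    rw [← real_inner_self_eq_norm_sq]
    nth_rewrite 1 [← ht]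
    rw [sum_inner]
    exact Finset.sum_congr rfl fun i _ => real_inner_smul_left _ _ _
  have hbound : ‖k‖ ^ 2 ≤ C * ‖k‖ := by
    rw [hkk, ← Finset.sum_compl_add_sum S, hC, Finset.sum_mul]
    have h1 : ∑ i ∈ S, t i * ⟪α i, k⟫ ≤ 0 :=
      Finset.sum_nonpos fun i hi =>
        mul_nonpos_of_nonneg_of_nonpos (htS i hi) (hneg i hi)
    have h2 : ∑ i ∈ Sᶜ, t i * ⟪α i, k⟫ ≤ ∑ i ∈ Sᶜ, 2 * m i / ⟪α i, α i⟫ * ‖α i‖ * ‖k‖ := by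
      apply Finset.sum_le_sum
      intro i hi
      have hiS : i ∉ S := by simpa using hi
      rw [htm i hiS]
      have hti : 0 ≤ 2 * m i / ⟪α i, α i⟫ := by
        have h1 := hm i hiS
        have h2 := hαpos i
        positivity
      calc 2 * m i / ⟪α i, α i⟫ * ⟪α i, k⟫
          ≤ 2 * m i / ⟪α i, α i⟫ * (‖α i‖ * ‖k‖) :=
            mul_le_mul_of_nonneg_left (real_inner_le_norm _ _) hti
        _ = 2 * m i / ⟪α i, α i⟫ * ‖α i‖ * ‖k‖ := by ring
    linarith
  have hknorm : ‖k‖ ≤ C := by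
    rcases eq_or_lt_of_le (norm_nonneg k) with h0 | h0
    · rw [← h0]; exact hCnn
    · have := hbound
      rw [sq] at this
      exact le_of_mul_le_mul_right (by linarith) h0
  -- conclude
  intro j _
  simp only [Set.mem_Iic]
  have h1 : (h j : ℝ) ≤ ‖lam j.1‖ * C := by
    rw [← hhval j]
    calc ⟪lam j.1, k⟫ ≤ ‖lam j.1‖ * ‖k‖ := real_inner_le_norm _ _
      _ ≤ ‖lam j.1‖ * C := mul_le_mul_of_nonneg_left hknorm (norm_nonneg _)
  have h2 : (h j : ℝ) ≤ (⌈‖lam j.1‖ * C⌉₊ : ℝ) := h1.trans (Nat.le_ceil _)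
  exact_mod_cast h2
end
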